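/- arXiv:2511.02251 — 7 statements merged into one kernel-verified Lean document; each statement's English description precedes it below -/
import Mathlib

section
/- Let V be an abelian group equipped with an element 1 ∈ V and, for each n ∈ ℤ, a biadditive product V × V → V, (u,v) ↦ u_n v, satisfying: (regularity) for all u,v ∈ V there exists N ∈ ℤ with u_n v = 0 for all n ≥ N; (creation) u_{−1} 1 = u and u_n 1 = 0 for all n ≥ 0; (Jacobi identity) for all u,v,w ∈ V and all m,n,l ∈ ℤ, ∑_{i≥0} (−1)^i binom(l,i) ( u_{m+l−i}(v_{n+i} w) − (−1)^l v_{n+l−i}(u_{m+i} w) ) = ∑_{i≥0} binom(m,i) (u_{l+i} v)_{m+n−i} w, where binom(l,i) denotes the generalized integer binomial coefficient l(l−1)⋯(l−i+1)/i! and all sums have only finitely many nonzero terms; and additionally (commutativity) u_n v = 0 for all u,v ∈ V and all n ≥ 0. Then the product u·v := u_{−1} v makes V a commutative associative unital ring with unit 1, and the additive maps D_m : V → V defined by D_m(v) = v_{−m−1} 1 (m ≥ 0) satisfy D_0 = id, the generalized Leibniz rule D_m(u·v) = ∑_{i+j=m} D_i(u)·D_j(v), and iterativity D_i ∘ D_j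 = binom(i+j,i) D_{i+j}. -/
/-!
Commutativity kills the right-hand side of the Jacobi identity at `l = 0`, so all modes commute:
`u_m (v_n w) = v_n (u_m w)`. At `m = 0` the Jacobi identity becomes the associativity formula
`(u_l v)_n w = ∑ᵢ (-1)ⁱ C(l, i) u_{l-i} (v_{n+i} w)`. Applied to the vacuum, the first gives
commutativity of `u · v = u_{-1} v` and the translation rule `u_m v = v · (u_m 1)`. The second
gives associativity and the Leibniz rule at `l = -1`, and iterativity at `l = -j-1`, `v = w = 1`,
once `D_m 1 = 0` for `m > 0`; the latter follows by induction from the Leibniz rule for `1 · 1`.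
-/

theorem Ring.choose_neg_natCast_sub_one (j i : ℕ) :
    Ring.choose (-(j : ℤ) - 1) i = (-1) ^ i * ((i + j).choose i : ℤ) := by
  rw [show -(j : ℤ) - 1 = -((j : ℤ) + 1) by ring, Ring.choose_neg,
    show (j : ℤ) + 1 + i - 1 = ((i + j : ℕ) : ℤ) by push_cast; ring, Ring.choose_natCast,
    Int.negOnePow_def, Units.smul_def, zsmul_eq_mul]
  simp

theorem Ring.neg_one_pow_mul_choose_neg_one (i : ℕ) :
    (-1 : ℤ) ^ i * Ring.choose (-1 : ℤ) i = 1 := by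
  have h := Ring.choose_neg_natCast_sub_one 0 i
  rw [Nat.cast_zero, neg_zero, zero_sub, add_zero, Nat.choose_self, Nat.cast_one,
    mul_one] at h
  rw [h, ← mul_pow, neg_one_mul, neg_neg, one_pow]

structure IsCommVertexRing {V : Type*} [AddCommGroup V] (p : ℤ → V → V → V) (one : V) :
    Prop where
  add_left : ∀ (n : ℤ) (u u' v : V), p n (u + u') v = p n u v + p n u' v
  add_right : ∀ (n : ℤ) (u v v' : V), p n u (v + v') = p n u v + p n u v'
  mul_one : ∀ u : V, p (-1) u one = u
  jacobi : ∀ (u v w : V) (m n l : ℤ),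
    ∑ᶠ i : ℕ, ((-1 : ℤ) ^ i * Ring.choose l i) •
        (p (m + l - i) u (p (n + i) v w)
          - (((-1 : ℤˣ) ^ l : ℤˣ) : ℤ) • p (n + l - i) v (p (m + i) u w))
      = ∑ᶠ i : ℕ, (Ring.choose m i) • p (m + n - i) (p (l + i) u v) w
  comm : ∀ (u v : V) (n : ℤ), 0 ≤ n → p n u v = 0

namespace IsCommVertexRing

variable {V : Type*} [AddCommGroup V] {p : ℤ → V → V → V} {one : V}

theorem p_zero_left (hV : IsCommVertexRing p one) (n : ℤ) (v : V) : p n 0 v = 0 := by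
  have h := hV.add_left n 0 0 v
  rwa [add_zero, left_eq_add] at h

theorem p_zero_right (hV : IsCommVertexRing p one) (n : ℤ) (u : V) : p n u 0 = 0 := by
  have h := hV.add_right n u 0 0
  rwa [add_zero, left_eq_add] at h

theorem left_comm (hV : IsCommVertexRing p one) (u v w : V) (m n : ℤ) :
    p m u (p n v w) = p n v (p m u w) := by
  have h := hV.jacobi u v w m n 0
  rw [finsum_eq_single _ 0 fun i hi => by
      rw [Ring.choose_zero_pos ℤ (Nat.pos_of_ne_zero hi), mul_zero, zero_smul],
    finsum_eq_zero_of_forall_eq_zero fun i => by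
      rw [hV.comm u v _ (by omega), hV.p_zero_left, smul_zero]] at h
  simpa [sub_eq_zero] using h

theorem assoc_formula (hV : IsCommVertexRing p one) (u v w : V) (n l : ℤ) :
    p n (p l u v) w
      = ∑ᶠ i : ℕ, ((-1 : ℤ) ^ i * Ring.choose l i) • p (l - i) u (p (n + i) v w) := by
  have h := hV.jacobi u v w 0 n l
  rw [finsum_eq_single (fun i : ℕ => Ring.choose (0 : ℤ) i • _) 0 fun i hi => by
      rw [Ring.choose_zero_pos ℤ (Nat.pos_of_ne_zero hi), zero_smul]] at h
  simp only [Ring.choose_zero_right, one_smul, Nat.cast_zero, zero_add, sub_zero,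
    add_zero] at h
  rw [← h]
  refine finsum_congr fun i => ?_
  rw [hV.comm u w _ (Nat.cast_nonneg i), hV.p_zero_right, smul_zero, sub_zero]

theorem p_mul_left (hV : IsCommVertexRing p one) (u v w : V) (n : ℤ) :
    p n (p (-1) u v) w = ∑ᶠ i : ℕ, p (-1 - i) u (p (n + i) v w) := by
  simp only [hV.assoc_formula, Ring.neg_one_pow_mul_choose_neg_one, one_smul]

theorem mul_comm (hV : IsCommVertexRing p one) (u v : V) : p (-1) u v = p (-1) v u := by
  simpa only [hV.mul_one] using hV.left_comm u v one (-1) (-1)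

theorem one_mul (hV : IsCommVertexRing p one) (u : V) : p (-1) one u = u := by
  rw [hV.mul_comm, hV.mul_one]

theorem p_eq_mul_p_one (hV : IsCommVertexRing p one) (m : ℤ) (u v : V) :
    p m u v = p (-1) v (p m u one) := by
  simpa only [hV.mul_one] using hV.left_comm u v one m (-1)

theorem mul_assoc (hV : IsCommVertexRing p one) (u v w : V) :
    p (-1) (p (-1) u v) w = p (-1) u (p (-1) v w) := by
  rw [hV.p_mul_left, finsum_eq_single _ 0 fun i hi => by
    rw [hV.comm v w _ (by omega), hV.p_zero_right]]
  simp

theorem leibniz (hV : IsCommVertexRing p one) (m : ℕ) (u v : V) :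
    p (-(m : ℤ) - 1) (p (-1) u v) one
      = ∑ ij ∈ Finset.HasAntidiagonal.antidiagonal m,
          p (-1) (p (-(ij.1 : ℤ) - 1) u one) (p (-(ij.2 : ℤ) - 1) v one) := by
  rw [hV.p_mul_left, finsum_eq_sum_of_support_subset _ (s := Finset.range (m + 1))
    fun i hi => ?_, Finset.Nat.sum_antidiagonal_eq_sum_range_succ_mk]
  · refine Finset.sum_congr rfl fun k hk => ?_
    have hkm : k ≤ m := Nat.lt_succ_iff.mp (Finset.mem_range.mp hk)
    rw [hV.p_eq_mul_p_one _ u, hV.mul_comm, show (-1 : ℤ) - k = -(k : ℤ) - 1 by ring,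
      show -(m : ℤ) - 1 + k = -((m - k : ℕ) : ℤ) - 1 by push_cast [hkm]; ring]
  · by_contra hout
    simp only [Finset.coe_range, Set.mem_Iio, not_lt] at hout
    exact hi (by dsimp only; rw [hV.comm v one _ (by omega), hV.p_zero_right])

theorem p_one_one_eq_zero (hV : IsCommVertexRing p one) {m : ℕ} (hm : m ≠ 0) :
    p (-(m : ℤ) - 1) one one = 0 := by
  induction m using Nat.strong_induction_on with
  | _ m ih =>
    have h := hV.leibniz m one one
    rw [Finset.sum_eq_add (0, m) (m, 0) (by simp; omega) ?_ (by simp) (by simp)] at h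
    · simp only [Nat.cast_zero, neg_zero, zero_sub, hV.mul_one, hV.one_mul] at h
      simpa using h
    · rintro ⟨i, j⟩ hij hne
      simp only [Finset.HasAntidiagonal.mem_antidiagonal, ne_eq, Prod.mk.injEq] at hij hne
      rw [ih i (by omega) (by omega), hV.p_zero_left]

theorem iterative (hV : IsCommVertexRing p one) (i j : ℕ) (v : V) :
    p (-(i : ℤ) - 1) (p (-(j : ℤ) - 1) v one) one
      = (i + j).choose i • p (-((i : ℤ) + j) - 1) v one := by
  rw [hV.assoc_formula, finsum_eq_single _ i fun k hk => ?_]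
  · rw [show -(i : ℤ) - 1 + i = -1 by ring, hV.mul_one, Ring.choose_neg_natCast_sub_one,
      ← _root_.mul_assoc, ← mul_pow, neg_one_mul, neg_neg, one_pow, _root_.one_mul,
      natCast_zsmul]
    congr 2; ring
  · rcases lt_or_gt_of_ne hk with hlt | hgt
    · rw [show -(i : ℤ) - 1 + k = -((i - k : ℕ) : ℤ) - 1 by push_cast [hlt.le]; ring,
        hV.p_one_one_eq_zero (by omega), hV.p_zero_right, smul_zero]
    · rw [hV.comm one one _ (by omega), hV.p_zero_right, smul_zero]

end IsCommVertexRing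

theorem commutative_vertex_ring_is_iterative_differential_ring_general
    {V : Type*} [AddCommGroup V] (p : ℤ → V → V → V) (one : V)
    (hadd_left : ∀ (n : ℤ) (u u' v : V), p n (u + u') v = p n u v + p n u' v)
    (hadd_right : ∀ (n : ℤ) (u v v' : V), p n u (v + v') = p n u v + p n u v')
    (hcreate₁ : ∀ u : V, p (-1) u one = u)
    (hjacobi : ∀ (u v w : V) (m n l : ℤ),
      ∑ᶠ i : ℕ, ((-1 : ℤ) ^ i * Ring.choose l i) •
          (p (m + l - i) u (p (n + i) v w)
            - (((-1 : ℤˣ) ^ l : ℤˣ) : ℤ) • p (n + l - i) v (p (m + i) u w))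
        = ∑ᶠ i : ℕ, (Ring.choose m i) • p (m + n - i) (p (l + i) u v) w)
    (hcomm : ∀ (u v : V) (n : ℤ), 0 ≤ n → p n u v = 0) :
    -- the product `u * v := u_{-1} v` makes `V` a commutative associative
    -- unital ring with unit `one` (biadditivity holds by hypothesis):
    (∀ u v : V, p (-1) u v = p (-1) v u) ∧
    (∀ u v w : V, p (-1) (p (-1) u v) w = p (-1) u (p (-1) v w)) ∧
    (∀ u : V, p (-1) one u = u) ∧
    (∀ u : V, p (-1) u one = u) ∧
    (∀ u u' v : V, p (-1) (u + u') v = p (-1) u v + p (-1) u' v) ∧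
    (∀ u v v' : V, p (-1) u (v + v') = p (-1) u v + p (-1) u v') ∧
    -- `D 0 = id`:
    (∀ v : V, p (-(0 : ℕ) - 1) v one = v) ∧
    -- generalized Leibniz rule `D m (u * v) = ∑_{i+j=m} (D i u) * (D j v)`:
    (∀ (m : ℕ) (u v : V),
      p (-(m : ℤ) - 1) (p (-1) u v) one
        = ∑ ij ∈ Finset.HasAntidiagonal.antidiagonal m,
            p (-1) (p (-(ij.1 : ℤ) - 1) u one) (p (-(ij.2 : ℤ) - 1) v one)) ∧
    -- iterativity `D i ∘ D j = binom(i+j,i) • D (i+j)`: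
    (∀ (i j : ℕ) (v : V),
      p (-(i : ℤ) - 1) (p (-(j : ℤ) - 1) v one) one
        = ((i + j).choose i) • p (-((i : ℤ) + j) - 1) v one) := by
  have hV : IsCommVertexRing p one := ⟨hadd_left, hadd_right, hcreate₁, hjacobi, hcomm⟩
  exact ⟨hV.mul_comm, hV.mul_assoc, hV.one_mul, hV.mul_one, hadd_left (-1), hadd_right (-1),
    hV.mul_one, hV.leibniz, hV.iterative⟩

/-- A commutative vertex ring is a commutative associative unital
ring with an iterative Hasse–Schmidt derivation.
A vertex ring is given by an abelian group `V`, biadditive `n`-th products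
`p n : V → V → V` (`n : ℤ`), and a vacuum `one : V`, satisfying regularity,
creation, and the Jacobi identity (in coefficient form, with generalized
integer binomial coefficients `Ring.choose (l : ℤ) (i : ℕ)`; all sums are
finitely supported, and are expressed via `finsum`).  Assume moreover
commutativity: `u_n v = 0` for all `n ≥ 0`.  Then `u * v := u_{-1} v` makes `V`
a commutative associative unital ring with unit `one`, and the maps
`D m v = v_{-m-1} 1` satisfy `D 0 = id`, the generalized Leibniz rule for this
product, and iterativity. -/
theorem commutative_vertex_ring_is_iterative_differential_ring
    {V : Type*} [AddCommGroup V] (p : ℤ → V → V → V) (one : V)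
    (hadd_left : ∀ (n : ℤ) (u u' v : V), p n (u + u') v = p n u v + p n u' v)
    (hadd_right : ∀ (n : ℤ) (u v v' : V), p n u (v + v') = p n u v + p n u v')
    (hreg : ∀ u v : V, ∃ N : ℤ, ∀ n : ℤ, N ≤ n → p n u v = 0)
    (hcreate₁ : ∀ u : V, p (-1) u one = u)
    (hcreate₂ : ∀ (u : V) (n : ℤ), 0 ≤ n → p n u one = 0)
    (hjacobi : ∀ (u v w : V) (m n l : ℤ),
      ∑ᶠ i : ℕ, ((-1 : ℤ) ^ i * Ring.choose l i) •
          (p (m + l - i) u (p (n + i) v w)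
            - (((-1 : ℤˣ) ^ l : ℤˣ) : ℤ) • p (n + l - i) v (p (m + i) u w))
        = ∑ᶠ i : ℕ, (Ring.choose m i) • p (m + n - i) (p (l + i) u v) w)
    (hcomm : ∀ (u v : V) (n : ℤ), 0 ≤ n → p n u v = 0) :
    -- the product `u * v := u_{-1} v` makes `V` a commutative associative
    -- unital ring with unit `one` (biadditivity holds by hypothesis):
    (∀ u v : V, p (-1) u v = p (-1) v u) ∧
    (∀ u v w : V, p (-1) (p (-1) u v) w = p (-1) u (p (-1) v w)) ∧
    (∀ u : V, p (-1) one u = u) ∧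
    (∀ u : V, p (-1) u one = u) ∧
    (∀ u u' v : V, p (-1) (u + u') v = p (-1) u v + p (-1) u' v) ∧
    (∀ u v v' : V, p (-1) u (v + v') = p (-1) u v + p (-1) u v') ∧
    -- `D 0 = id`:
    (∀ v : V, p (-(0 : ℕ) - 1) v one = v) ∧
    -- generalized Leibniz rule `D m (u * v) = ∑_{i+j=m} (D i u) * (D j v)`:
    (∀ (m : ℕ) (u v : V),
      p (-(m : ℤ) - 1) (p (-1) u v) one
        = ∑ ij ∈ Finset.HasAntidiagonal.antidiagonal m,
            p (-1) (p (-(ij.1 : ℤ) - 1) u one) (p (-(ij.2 : ℤ) - 1) v one)) ∧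
    -- iterativity `D i ∘ D j = binom(i+j,i) • D (i+j)`:
    (∀ (i j : ℕ) (v : V),
      p (-(i : ℤ) - 1) (p (-(j : ℤ) - 1) v one) one
        = ((i + j).choose i) • p (-((i : ℤ) + j) - 1) v one) :=
  commutative_vertex_ring_is_iterative_differential_ring_general p one hadd_left hadd_right hcreate₁
    hjacobi hcomm
end

section
/- Let V be an abelian group equipped with an element 1 ∈ V and, for each n ∈ ℤ, a biadditive product V × V → V, (u,v) ↦ u_n v, satisfying: (regularity) for all u,v ∈ V there exists N ∈ ℤ with u_n v = 0 for all n ≥ N; (creation) u_{−1} 1 = u and u_n 1 = 0 for all n ≥ 0; and (Jacobi identity) for all u,v,w ∈ V and all m,n,l ∈ ℤ, ∑_{i≥0} (−1)^i binom(l,i) ( u_{m+l−i}(v_{n+i} w) − (−1)^l v_{n+l−i}(u_{m+i} w) ) = ∑_{i≥0} binom(m,i) (u_{l+i} v)_{m+n−i} w, where binom(l,i) denotes the generalized integer binomial coefficient l(l−1)⋯(l−i+1)/i! and all sums have only finitely many nonzero terms. Then the additive maps D_m : V → V defined by D_m(v) = v_{−m−1} 1 (m ≥ 0) satisfy: D_0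 = id; D_m(u_n v) = ∑_{i+j=m} (D_i u)_n (D_j v) for all u,v ∈ V, n ∈ ℤ, m ≥ 0; and D_i ∘ D_j = binom(i+j,i) D_{i+j} for all i,j ≥ 0. -/
/-!
At `l = 0` the Jacobi identity is the commutator formula and at `m = 0` the associativity
formula. With the vacuum as middle argument the commutator formula shows that `1_n` commutes
with every `u_m`, so `1_n w = w_{-1} (1_n 1)`. With the vacuum as last argument the
associativity formula expands `(u_n v)_{-M-1} 1` over `i + k = M`; applied to `u = v = 1`
it gives `1_{-M-1} 1 = 2 • 1_{-M-1} 1` by induction on `M > 0`, so `1_n = δ_{n,-1}`.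
Feeding this back into the associativity formula with `v = 1` yields the translation
covariance `(D_j u)_n w = (-1)^j (n choose j) u_{n-j} w`, from which the Leibniz rule (via the
expansion) and iterativity (at `w = 1`) are read off.
-/

open Finset

theorem neg_one_pow_mul_choose_neg_sub_one (a k : ℕ) :
    (-1 : ℤ) ^ k * Ring.choose (-(a : ℤ) - 1) k = (a + k).choose k := by
  rw [show -(a : ℤ) - 1 = -((a : ℤ) + 1) by ring, Ring.choose_neg,
    show (a : ℤ) + 1 + k - 1 = ((a + k : ℕ) : ℤ) by push_cast; ring, Ring.choose_natCast,
    Units.smul_def, Int.coe_negOnePow_natCast, smul_eq_mul, ← mul_assoc, ← mul_pow]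
  norm_num

section

variable {V : Type*} [AddCommGroup V] {p : ℤ → V → V → V} {one : V}

def JacobiIdentity (p : ℤ → V → V → V) : Prop :=
  ∀ (u v w : V) (m n l : ℤ),
    ∑ᶠ i : ℕ, ((-1 : ℤ) ^ i * Ring.choose l i) •
        (p (m + l - i) u (p (n + i) v w)
          - (((-1 : ℤˣ) ^ l : ℤˣ) : ℤ) • p (n + l - i) v (p (m + i) u w))
      = ∑ᶠ i : ℕ, (Ring.choose m i) • p (m + n - i) (p (l + i) u v) w

theorem JacobiIdentity.commutator (hJ : JacobiIdentity p) (u v w : V) (m n : ℤ) :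
    p m u (p n v w) - p n v (p m u w) =
      ∑ᶠ i : ℕ, Ring.choose m i • p (m + n - i) (p i u v) w := by
  have h := hJ u v w m n 0
  rw [finsum_eq_single _ 0 fun i hi => by
    rw [Ring.choose_zero_pos ℤ (Nat.pos_of_ne_zero hi), mul_zero, zero_smul]] at h
  simpa using h

theorem JacobiIdentity.associator (hJ : JacobiIdentity p) (u v w : V) (n l : ℤ) :
    p n (p l u v) w = ∑ᶠ i : ℕ, ((-1 : ℤ) ^ i * Ring.choose l i) •
      (p (l - i) u (p (n + i) v w)
        - (((-1 : ℤˣ) ^ l : ℤˣ) : ℤ) • p (n + l - i) v (p i u w)) := by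
  have h := hJ u v w 0 n l
  rw [finsum_eq_single (fun i : ℕ => Ring.choose (0 : ℤ) i • _) 0 fun i hi => by
    rw [Ring.choose_zero_pos ℤ (Nat.pos_of_ne_zero hi), zero_smul]] at h
  simpa using h.symm

theorem JacobiIdentity.vacuum_comm (hJ : JacobiIdentity p)
    (hzero_left : ∀ n w, p n 0 w = 0)
    (hcreate₂ : ∀ (u : V) (n : ℤ), 0 ≤ n → p n u one = 0) (u w : V) (m n : ℤ) :
    p m u (p n one w) = p n one (p m u w) := by
  have h := hJ.commutator u one w m n
  rw [finsum_eq_zero_of_forall_eq_zero fun i => by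
    rw [hcreate₂ u i i.cast_nonneg, hzero_left, smul_zero]] at h
  exact sub_eq_zero.mp h

theorem JacobiIdentity.vacuum_mul_eq (hJ : JacobiIdentity p)
    (hzero_left : ∀ n w, p n 0 w = 0)
    (hcreate₁ : ∀ u : V, p (-1) u one = u)
    (hcreate₂ : ∀ (u : V) (n : ℤ), 0 ≤ n → p n u one = 0)
    (n : ℤ) (w : V) : p n one w = p (-1) w (p n one one) :=
  calc p n one w = p n one (p (-1) w one) := by rw [hcreate₁]
    _ = p (-1) w (p n one one) := (hJ.vacuum_comm hzero_left hcreate₂ w one (-1) n).symm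

theorem JacobiIdentity.vacuum_mul_of_eq_neg_one (hJ : JacobiIdentity p)
    (hzero_left : ∀ n w, p n 0 w = 0)
    (hcreate₁ : ∀ u : V, p (-1) u one = u)
    (hcreate₂ : ∀ (u : V) (n : ℤ), 0 ≤ n → p n u one = 0)
    {n : ℤ} (hn : n = -1) (w : V) : p n one w = w := by
  rw [hJ.vacuum_mul_eq hzero_left hcreate₁ hcreate₂, hn, hcreate₁, hcreate₁]

theorem JacobiIdentity.mul_vacuum_expansion (hJ : JacobiIdentity p)
    (hzero_right : ∀ n u, p n u 0 = 0)
    (hcreate₂ : ∀ (u : V) (n : ℤ), 0 ≤ n → p n u one = 0) (M : ℕ) (n : ℤ) (u v : V) :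
    p (-(M : ℤ) - 1) (p n u v) one =
      ∑ ik ∈ antidiagonal M, ((-1 : ℤ) ^ ik.1 * Ring.choose n ik.1) •
        p (n - ik.1) u (p (-(ik.2 : ℤ) - 1) v one) := by
  have hterm (i : ℕ) : ((-1 : ℤ) ^ i * Ring.choose n i) •
      (p (n - i) u (p (-(M : ℤ) - 1 + i) v one)
        - (((-1 : ℤˣ) ^ n : ℤˣ) : ℤ) • p (-(M : ℤ) - 1 + n - i) v (p i u one))
      = ((-1 : ℤ) ^ i * Ring.choose n i) • p (n - i) u (p (-(M : ℤ) - 1 + i) v one) := by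
    rw [hcreate₂ u i i.cast_nonneg, hzero_right, smul_zero, sub_zero]
  rw [hJ.associator, finsum_congr hterm, finsum_eq_sum_of_support_subset (s := range (M + 1)),
    Nat.sum_antidiagonal_eq_sum_range_succ_mk]
  · refine sum_congr rfl fun i _ => ?_
    rw [show -(M : ℤ) - 1 + i = -((M - i : ℕ) : ℤ) - 1 by grind]
  · intro i hi
    by_contra hiM
    exact hi (by dsimp only; rw [hcreate₂ v _ (by grind), hzero_right, smul_zero])

theorem JacobiIdentity.vacuum_mul_vacuum_eq_zero (hJ : JacobiIdentity p)
    (hzero_left : ∀ n w, p n 0 w = 0) (hzero_right : ∀ n u, p n u 0 = 0)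
    (hcreate₁ : ∀ u : V, p (-1) u one = u)
    (hcreate₂ : ∀ (u : V) (n : ℤ), 0 ≤ n → p n u one = 0)
    (M : ℕ) (hM : 0 < M) : p (-(M : ℤ) - 1) one one = 0 := by
  induction M using Nat.strong_induction_on with
  | _ M ih =>
  have hcoef (i : ℕ) : (-1 : ℤ) ^ i * Ring.choose (-1) i = 1 := by
    simpa using neg_one_pow_mul_choose_neg_sub_one 0 i
  have h := hJ.mul_vacuum_expansion hzero_right hcreate₂ M (-1) one one
  simp only [hcoef, one_smul] at h
  -- the summands at `(0, M)` and `(M, 0)` are both `1_{-M-1} 1`, the others vanish by induction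
  rw [hcreate₁, sum_eq_add (0, M) (M, 0) (by simp; omega) ?_ (by simp) (by simp)] at h
  · simp only [sub_zero, CharP.cast_eq_zero, neg_zero, zero_sub, hcreate₁,
      hJ.vacuum_mul_of_eq_neg_one hzero_left hcreate₁ hcreate₂ rfl] at h
    rw [show (-1 : ℤ) - M = -M - 1 by ring] at h
    exact left_eq_add.mp h
  · rintro ⟨i, k⟩ hik ⟨hi, hk⟩
    rw [HasAntidiagonal.mem_antidiagonal] at hik
    rw [ih k (by grind) (by grind), hzero_right]

theorem JacobiIdentity.vacuum_mul_of_ne_neg_one (hJ : JacobiIdentity p)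
    (hzero_left : ∀ n w, p n 0 w = 0) (hzero_right : ∀ n u, p n u 0 = 0)
    (hcreate₁ : ∀ u : V, p (-1) u one = u)
    (hcreate₂ : ∀ (u : V) (n : ℤ), 0 ≤ n → p n u one = 0)
    {n : ℤ} (hn : n ≠ -1) (w : V) : p n one w = 0 := by
  have hvac : p n one one = 0 := by
    obtain hn₀ | ⟨M, rfl⟩ : 0 ≤ n ∨ ∃ M : ℕ, n = -(M : ℤ) - 1 :=
      (le_or_gt 0 n).imp_right fun h => ⟨(-n - 1).toNat, by omega⟩
    · exact hcreate₂ one n hn₀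
    · exact hJ.vacuum_mul_vacuum_eq_zero hzero_left hzero_right hcreate₁ hcreate₂ M (by omega)
  rw [hJ.vacuum_mul_eq hzero_left hcreate₁ hcreate₂, hvac, hzero_right]

theorem JacobiIdentity.translation_covariance (hJ : JacobiIdentity p)
    (hzero_left : ∀ n w, p n 0 w = 0) (hzero_right : ∀ n u, p n u 0 = 0)
    (hcreate₁ : ∀ u : V, p (-1) u one = u)
    (hcreate₂ : ∀ (u : V) (n : ℤ), 0 ≤ n → p n u one = 0)
    (j : ℕ) (n : ℤ) (u w : V) :
    p n (p (-(j : ℤ) - 1) u one) w = ((-1 : ℤ) ^ j * Ring.choose n j) • p (n - j) u w := by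
  have hsign : (((-1 : ℤˣ) ^ (-(j : ℤ) - 1) : ℤˣ) : ℤ) = -(-1) ^ j := by
    rw [← Int.negOnePow_def, Int.negOnePow_sub, Int.negOnePow_neg, Units.val_mul,
      Int.coe_negOnePow_natCast, Int.negOnePow_one]
    simp
  have hvac (k : ℤ) := hJ.vacuum_mul_of_eq_neg_one hzero_left hcreate₁ hcreate₂ (n := k)
  have hvac' (k : ℤ) :=
    hJ.vacuum_mul_of_ne_neg_one hzero_left hzero_right hcreate₁ hcreate₂ (n := k)
  rw [hJ.associator, hsign]
  -- for `n < 0` only the first part of the summand at `i = -n-1` survives,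
  -- for `n ≥ 0` only the second part of the summand at `i = n - j`
  obtain ⟨a, rfl⟩ | ⟨m, rfl⟩ : (∃ a : ℕ, n = -(a : ℤ) - 1) ∨ ∃ m : ℕ, n = m :=
    (lt_or_ge n 0).imp (fun h => ⟨(-n - 1).toNat, by omega⟩) fun h => ⟨n.toNat, by omega⟩
  · rw [finsum_eq_single _ a fun i hi => by
      simp (disch := omega) only [hvac', hzero_right, smul_zero, sub_zero]]
    simp (disch := omega) only [hvac, hvac', smul_zero, sub_zero]
    rw [neg_one_pow_mul_choose_neg_sub_one, neg_one_pow_mul_choose_neg_sub_one, add_comm j a,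
      show -(j : ℤ) - 1 - a = -a - 1 - j by ring, Nat.choose_symm_add]
  · rw [finsum_eq_single _ (m - j) fun i hi => by
      simp (disch := omega) only [hvac', hzero_right, smul_zero, sub_zero]]
    simp (disch := omega) only [hvac', hzero_right]
    rcases le_or_gt j m with hjm | hmj
    · obtain ⟨k, rfl⟩ := Nat.exists_eq_add_of_le hjm
      rw [Nat.add_sub_cancel_left, hvac _ (by push_cast; ring), zero_sub, neg_smul, neg_neg,
        smul_smul, Ring.choose_natCast, neg_one_pow_mul_choose_neg_sub_one, Nat.cast_add,
        add_sub_cancel_left, Nat.choose_symm_add, mul_comm]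
    · rw [hvac' _ (by omega), smul_zero, sub_zero, smul_zero, Ring.choose_natCast,
        Nat.choose_eq_zero_of_lt hmj, Nat.cast_zero, mul_zero, zero_smul]

end

theorem vertex_ring_canonical_hasse_schmidt_general
    {V : Type*} [AddCommGroup V] (p : ℤ → V → V → V) (one : V)
    (hadd_left : ∀ (n : ℤ) (u u' v : V), p n (u + u') v = p n u v + p n u' v)
    (hadd_right : ∀ (n : ℤ) (u v v' : V), p n u (v + v') = p n u v + p n u v')
    (hcreate₁ : ∀ u : V, p (-1) u one = u)
    (hcreate₂ : ∀ (u : V) (n : ℤ), 0 ≤ n → p n u one = 0)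
    (hjacobi : ∀ (u v w : V) (m n l : ℤ),
      ∑ᶠ i : ℕ, ((-1 : ℤ) ^ i * Ring.choose l i) •
          (p (m + l - i) u (p (n + i) v w)
            - (((-1 : ℤˣ) ^ l : ℤˣ) : ℤ) • p (n + l - i) v (p (m + i) u w))
        = ∑ᶠ i : ℕ, (Ring.choose m i) • p (m + n - i) (p (l + i) u v) w) :
    (∀ v : V, p (-(0 : ℕ) - 1) v one = v) ∧
    (∀ (m : ℕ) (n : ℤ) (u v : V),
      p (-(m : ℤ) - 1) (p n u v) one
        = ∑ ij ∈ Finset.HasAntidiagonal.antidiagonal m,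
            p n (p (-(ij.1 : ℤ) - 1) u one) (p (-(ij.2 : ℤ) - 1) v one)) ∧
    (∀ (i j : ℕ) (v : V),
      p (-(i : ℤ) - 1) (p (-(j : ℤ) - 1) v one) one
        = ((i + j).choose i) • p (-((i : ℤ) + j) - 1) v one) := by
  have hJ : JacobiIdentity p := hjacobi
  have hzero_left (n : ℤ) (w : V) : p n 0 w = 0 :=
    (AddMonoidHom.mk' (p n · w) (hadd_left n · · w)).map_zero
  have hzero_right (n : ℤ) (u : V) : p n u 0 = 0 :=
    (AddMonoidHom.mk' (p n u) (hadd_right n u)).map_zero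
  have htrans := hJ.translation_covariance hzero_left hzero_right hcreate₁ hcreate₂
  refine ⟨fun v => by simpa using hcreate₁ v, fun m n u v => ?_, fun i j v => ?_⟩
  · rw [hJ.mul_vacuum_expansion hzero_right hcreate₂]
    exact sum_congr rfl fun ij _ => (htrans ..).symm
  · rw [htrans, neg_one_pow_mul_choose_neg_sub_one, Nat.choose_symm_add, natCast_zsmul,
      show -(i : ℤ) - 1 - j = -(i + j) - 1 by ring]

/-- The canonical Hasse–Schmidt derivation of a vertex ring.
A vertex ring is given by an abelian group `V`, biadditive `n`-th products
`p n : V → V → V` (`n : ℤ`), and a vacuum `one : V`, satisfying regularity,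
creation, and the Jacobi identity (in coefficient form, with generalized
integer binomial coefficients `Ring.choose (l : ℤ) (i : ℕ)`; all sums are
finitely supported, and are expressed via `finsum`).
Then the maps `D m v = v_{-m-1} 1` satisfy `D 0 = id`, the generalized Leibniz
rule for every `n`-th product, and iterativity. -/
theorem vertex_ring_canonical_hasse_schmidt
    {V : Type*} [AddCommGroup V] (p : ℤ → V → V → V) (one : V)
    (hadd_left : ∀ (n : ℤ) (u u' v : V), p n (u + u') v = p n u v + p n u' v)
    (hadd_right : ∀ (n : ℤ) (u v v' : V), p n u (v + v') = p n u v + p n u v')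
    (hreg : ∀ u v : V, ∃ N : ℤ, ∀ n : ℤ, N ≤ n → p n u v = 0)
    (hcreate₁ : ∀ u : V, p (-1) u one = u)
    (hcreate₂ : ∀ (u : V) (n : ℤ), 0 ≤ n → p n u one = 0)
    (hjacobi : ∀ (u v w : V) (m n l : ℤ),
      ∑ᶠ i : ℕ, ((-1 : ℤ) ^ i * Ring.choose l i) •
          (p (m + l - i) u (p (n + i) v w)
            - (((-1 : ℤˣ) ^ l : ℤˣ) : ℤ) • p (n + l - i) v (p (m + i) u w))
        = ∑ᶠ i : ℕ, (Ring.choose m i) • p (m + n - i) (p (l + i) u v) w) :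
    (∀ v : V, p (-(0 : ℕ) - 1) v one = v) ∧
    (∀ (m : ℕ) (n : ℤ) (u v : V),
      p (-(m : ℤ) - 1) (p n u v) one
        = ∑ ij ∈ Finset.HasAntidiagonal.antidiagonal m,
            p n (p (-(ij.1 : ℤ) - 1) u one) (p (-(ij.2 : ℤ) - 1) v one)) ∧
    (∀ (i j : ℕ) (v : V),
      p (-(i : ℤ) - 1) (p (-(j : ℤ) - 1) v one) one
        = ((i + j).choose i) • p (-((i : ℤ) + j) - 1) v one) :=
  vertex_ring_canonical_hasse_schmidt_general p one hadd_left hadd_right hcreate₁ hcreate₂ hjacobi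
end

section
/- Let Λ be a type and let P = ℤ[x_{λ,j} : λ ∈ Λ, j ∈ ℕ] be the polynomial ring over ℤ in variables indexed by Λ × ℕ. There exists a unique ring homomorphism Φ : P → P[[X]] into the formal power series ring over P such that Φ(x_{λ,j}) = ∑_{i≥0} binom(i+j,i) x_{λ,i+j} X^i for all λ ∈ Λ and j ∈ ℕ. Moreover, the additive maps D_i : P → P defined by taking the i-th coefficient of Φ satisfy D_0 = id and the iterativity law D_i ∘ D_j = binom(i+j,i) D_{i+j} for all i,j ≥ 0. -/
/-!
Write `g_λ = ∑ₙ x_{λ,n} Xⁿ` and `D⁽ʲ⁾` for the `j`-th Hasse derivative of power series. The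
prescribed value of `Φ(x_{λ,j})` is `D⁽ʲ⁾ g_λ`, so `Φ` exists and is unique by the universal
property of `P`. Taylor expansion `f ↦ f(X + Y) = ∑ⱼ D⁽ʲ⁾f Yʲ` is a ring homomorphism
`R⟦X⟧ → R⟦X⟧⟦Y⟧` (Leibniz rule for Hasse derivatives), and iterativity of `Φ` says that applying
`Φ` coefficientwise to `Φ` agrees with Taylor expansion after `Φ`. Both sides are ring
homomorphisms out of `P`, and on the variables their agreement is the iterativity
`D⁽ⁱ⁾ D⁽ʲ⁾ = binom(i+j,i) D⁽ⁱ⁺ʲ⁾` of Hasse derivatives.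

The identities for Hasse derivatives of power series are reduced to the polynomial ones by
truncation: the `n`-th coefficient of `D⁽ᵏ⁾f` only involves the coefficients of `f` of degree at
most `n + k`.
-/

open Finset

namespace PowerSeries

variable {R : Type*} [CommSemiring R]

noncomputable def hasseDeriv (k : ℕ) : R⟦X⟧ →ₗ[R] R⟦X⟧ where
  toFun f := mk fun n => (n + k).choose k • coeff (n + k) f
  map_add' f g := by ext; simp
  map_smul' r f := by
    ext
    simp only [coeff_mk, coeff_smul, smul_eq_mul, RingHom.id_apply, mul_smul_comm]

theorem coeff_hasseDeriv (k n : ℕ) (f : R⟦X⟧) :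
    coeff n (hasseDeriv k f) = (n + k).choose k • coeff (n + k) f := by
  simp only [hasseDeriv, LinearMap.coe_mk, AddHom.coe_mk, coeff_mk]

theorem coeff_hasseDeriv_eq_coeff_trunc {k n m : ℕ} (h : n + k < m) (f : R⟦X⟧) :
    coeff n (hasseDeriv k f) = (Polynomial.hasseDeriv k (trunc m f)).coeff n := by
  rw [coeff_hasseDeriv, Polynomial.hasseDeriv_coeff, coeff_trunc, if_pos h, nsmul_eq_mul]

theorem hasseDeriv_mul (k : ℕ) (f g : R⟦X⟧) :
    hasseDeriv k (f * g) = ∑ ij ∈ antidiagonal k, hasseDeriv ij.1 f * hasseDeriv ij.2 g := by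
  ext n
  have hsummand : ∀ ij ∈ antidiagonal k, coeff n (hasseDeriv ij.1 f * hasseDeriv ij.2 g) =
      (Polynomial.hasseDeriv ij.1 (trunc (n + k + 1) f) *
        Polynomial.hasseDeriv ij.2 (trunc (n + k + 1) g)).coeff n := by
    intro ij hij
    rw [HasAntidiagonal.mem_antidiagonal] at hij
    rw [coeff_mul, Polynomial.coeff_mul]
    refine sum_congr rfl fun p hp => ?_
    rw [HasAntidiagonal.mem_antidiagonal] at hp
    rw [coeff_hasseDeriv_eq_coeff_trunc (m := n + k + 1) (by omega),
      coeff_hasseDeriv_eq_coeff_trunc (m := n + k + 1) (by omega)]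
  rw [map_sum, sum_congr rfl hsummand, ← Polynomial.finsetSum_coeff,
    ← Polynomial.hasseDeriv_mul, coeff_hasseDeriv,
    coeff_mul_eq_coeff_trunc_mul_trunc _ _ (Nat.lt_succ_self _), ← Polynomial.coe_mul,
    Polynomial.coeff_coe, Polynomial.hasseDeriv_coeff, nsmul_eq_mul]

theorem hasseDeriv_comp (k l : ℕ) (f : R⟦X⟧) :
    hasseDeriv k (hasseDeriv l f) = (k + l).choose k • hasseDeriv (k + l) f := by
  ext n
  rw [coeff_hasseDeriv, coeff_hasseDeriv_eq_coeff_trunc (m := n + k + l + 1) (by omega),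
    nsmul_eq_mul, ← Polynomial.hasseDeriv_coeff, ← LinearMap.comp_apply, Polynomial.hasseDeriv_comp,
    LinearMap.smul_apply, Polynomial.coeff_smul, map_nsmul,
    coeff_hasseDeriv_eq_coeff_trunc (m := n + k + l + 1) (by omega)]

theorem hasseDeriv_one (k : ℕ) : hasseDeriv k (1 : R⟦X⟧) = if k = 0 then 1 else 0 := by
  ext n
  rw [coeff_hasseDeriv, coeff_one]
  split_ifs <;> simp_all

/-- Taylor expansion `f(X) ↦ f(X + Y)`, with the outer variable playing the role of `Y`. -/
noncomputable def hasseDerivSeries : R⟦X⟧ →+* R⟦X⟧⟦X⟧ where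
  toFun f := mk fun j => hasseDeriv j f
  map_one' := by
    ext j : 1
    rw [coeff_mk, hasseDeriv_one, coeff_one]
  map_mul' f g := by
    ext j : 1
    rw [coeff_mk, hasseDeriv_mul, coeff_mul]
    simp only [coeff_mk]
  map_zero' := by ext; simp
  map_add' f g := by ext; simp

theorem coeff_hasseDerivSeries (j : ℕ) (f : R⟦X⟧) :
    coeff j (hasseDerivSeries f) = hasseDeriv j f := by
  simp only [hasseDerivSeries, RingHom.coe_mk, MonoidHom.coe_mk, OneHom.coe_mk, coeff_mk]

def IsIterative (Φ : R →+* R⟦X⟧) : Prop :=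
  ∀ (i j : ℕ) (a : R), coeff i (Φ (coeff j (Φ a))) = (i + j).choose i • coeff (i + j) (Φ a)

theorem isIterative_of_map_comp_eq {Φ : R →+* R⟦X⟧}
    (h : (map Φ).comp Φ = hasseDerivSeries.comp Φ) : IsIterative Φ := by
  intro i j a
  rw [← coeff_map, ← RingHom.comp_apply (map Φ), h, RingHom.comp_apply, coeff_hasseDerivSeries,
    coeff_hasseDeriv, Nat.choose_symm_add]

end PowerSeries

open PowerSeries

namespace ArcAlgebra

variable {Λ : Type*}

noncomputable def genericSeries (lam : Λ) : (MvPolynomial (Λ × ℕ) ℤ)⟦X⟧ :=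
  PowerSeries.mk fun n => MvPolynomial.X (lam, n)

theorem coeff_genericSeries (lam : Λ) (n : ℕ) :
    coeff n (genericSeries lam) = MvPolynomial.X (lam, n) :=
  coeff_mk _ _

theorem hasseDeriv_genericSeries (lam : Λ) (j : ℕ) :
    hasseDeriv j (genericSeries lam) =
      PowerSeries.mk fun i => (i + j).choose i • MvPolynomial.X (lam, i + j) := by
  ext i
  rw [coeff_hasseDeriv, coeff_genericSeries, coeff_mk, Nat.choose_symm_add]

noncomputable def arcHom (Λ : Type*) :
    MvPolynomial (Λ × ℕ) ℤ →+* (MvPolynomial (Λ × ℕ) ℤ)⟦X⟧ :=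
  MvPolynomial.eval₂Hom (Int.castRingHom _) fun p => hasseDeriv p.2 (genericSeries p.1)

theorem arcHom_X (lam : Λ) (j : ℕ) :
    arcHom Λ (MvPolynomial.X (lam, j)) = hasseDeriv j (genericSeries lam) :=
  MvPolynomial.eval₂Hom_X' _ _ _

variable {Φ : MvPolynomial (Λ × ℕ) ℤ →+* (MvPolynomial (Λ × ℕ) ℤ)⟦X⟧}

theorem eq_arcHom
    (hΦ : ∀ lam j, Φ (MvPolynomial.X (lam, j)) = hasseDeriv j (genericSeries lam)) :
    Φ = arcHom Λ :=
  MvPolynomial.ringHom_ext' (RingHom.ext_int _ _) fun ⟨lam, j⟩ =>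
    (hΦ lam j).trans (arcHom_X lam j).symm

theorem constantCoeff_comp_eq_id
    (hΦ : ∀ lam j, Φ (MvPolynomial.X (lam, j)) = hasseDeriv j (genericSeries lam)) :
    constantCoeff.comp Φ = RingHom.id _ := by
  refine MvPolynomial.ringHom_ext' (RingHom.ext_int _ _) fun ⟨lam, k⟩ => ?_
  rw [RingHom.comp_apply, hΦ, ← coeff_zero_eq_constantCoeff_apply, coeff_hasseDeriv,
    coeff_genericSeries, zero_add, Nat.choose_self, one_smul, RingHom.id_apply]

theorem map_comp_eq_hasseDerivSeries_comp
    (hΦ : ∀ lam j, Φ (MvPolynomial.X (lam, j)) = hasseDeriv j (genericSeries lam)) :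
    (map Φ).comp Φ = hasseDerivSeries.comp Φ := by
  refine MvPolynomial.ringHom_ext' (RingHom.ext_int _ _) fun ⟨lam, k⟩ => ?_
  ext j : 1
  rw [RingHom.comp_apply, RingHom.comp_apply, coeff_map, coeff_hasseDerivSeries, hΦ,
    hasseDeriv_comp, coeff_hasseDeriv, coeff_genericSeries, map_nsmul, hΦ, Nat.choose_symm_add]

end ArcAlgebra

open ArcAlgebra in
/-- The arc algebra structure on a polynomial ring.
Let `P = ℤ[x_{λ,j}]` (`λ ∈ Λ`, `j ∈ ℕ`).  There is a unique ring homomorphism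
`Φ : P → P[[X]]` with `Φ(x_{λ,j}) = ∑_i binom(i+j,i) x_{λ,i+j} X^i`, and for
any such `Φ` the coefficient maps `D i = coeff i ∘ Φ` satisfy `D 0 = id` and
the iterativity law `D i ∘ D j = binom(i+j,i) D (i+j)`. -/
theorem arc_algebra_of_polynomial_ring
    (Λ : Type*) :
    (∃! Φ : MvPolynomial (Λ × ℕ) ℤ →+* PowerSeries (MvPolynomial (Λ × ℕ) ℤ),
      ∀ (lam : Λ) (j : ℕ),
        Φ (MvPolynomial.X (lam, j))
          = PowerSeries.mk fun i => ((i + j).choose i) • MvPolynomial.X (lam, i + j)) ∧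
    (∀ Φ : MvPolynomial (Λ × ℕ) ℤ →+* PowerSeries (MvPolynomial (Λ × ℕ) ℤ),
      (∀ (lam : Λ) (j : ℕ),
        Φ (MvPolynomial.X (lam, j))
          = PowerSeries.mk fun i => ((i + j).choose i) • MvPolynomial.X (lam, i + j)) →
      (∀ q : MvPolynomial (Λ × ℕ) ℤ, PowerSeries.coeff 0 (Φ q) = q) ∧
      (∀ (i j : ℕ) (q : MvPolynomial (Λ × ℕ) ℤ),
        PowerSeries.coeff i (Φ (PowerSeries.coeff j (Φ q)))
          = ((i + j).choose i) • PowerSeries.coeff (i + j) (Φ q))) := by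
  simp_rw [← hasseDeriv_genericSeries]
  refine ⟨⟨arcHom Λ, arcHom_X, fun Ψ hΨ => eq_arcHom hΨ⟩, fun Φ hΦ => ⟨fun q => ?_, ?_⟩⟩
  · rw [coeff_zero_eq_constantCoeff_apply, ← RingHom.comp_apply, constantCoeff_comp_eq_id hΦ,
      RingHom.id_apply]
  · exact isIterative_of_map_comp_eq (map_comp_eq_hasseDerivSeries_comp hΦ)
end

section
/- Let A be a commutative ring that is a ℚ-algebra. Then there exist a commutative ℚ-algebra A^∞, a derivation δ : A^∞ → A^∞, and a ring homomorphism ι : A → A^∞ with the following universal property: for every commutative ℚ-algebra S equipped with a derivation d : S → S and every ring homomorphism f : A → S, there exists a unique ring homomorphism φ : A^∞ → S satisfying φ ∘ ι = f and φ ∘ δ = d ∘ φ. -/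
/-!
`A^∞` is presented by generators and relations: the polynomial ℚ-algebra on symbols `X (a, n)`
(standing for the `n`-th derivative of `a`), with derivation `X (a, n) ↦ X (a, n + 1)`, modulo the
ideal generated by all iterated derivatives of the relations saying that `a ↦ X (a, 0)` is a ring
map. That ideal is stable under the derivation, so the derivation descends. Given `f : A → S` and
`d` on `S`, evaluating `X (a, n) ↦ d^[n] (f a)` intertwines the two derivations and therefore kills
the ideal; it is the only choice, since `X (a, n)` is the `n`-th derivative of the image of `a`.
Over a ℚ-algebra an additive Leibniz map is automatically ℚ-linear, so `d` is a ℚ-derivation.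
-/

open MvPolynomial

universe u

def Derivation.ofMapAddOfLeibniz {S : Type*} [CommRing S] [Algebra ℚ S] (d : S → S)
    (hadd : ∀ x y, d (x + y) = d x + d y) (hmul : ∀ x y, d (x * y) = d x * y + x * d y) :
    Derivation ℚ S S :=
  Derivation.mk' (AddMonoidHom.mk' d hadd).toRatLinearMap fun x y => by
    simp only [AddMonoidHom.coe_toRatLinearMap, AddMonoidHom.mk'_apply, hmul, smul_eq_mul]
    ring

namespace ArcAlgebra

section Presentation

variable (A : Type*)

abbrev Poly : Type _ := MvPolynomial (A × ℕ) ℚ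

noncomputable def shift : Derivation ℚ (Poly A) (Poly A) :=
  mkDerivation ℚ fun p => X (p.1, p.2 + 1)

@[simp]
lemma shift_X (a : A) (n : ℕ) : shift A (X (a, n)) = X (a, n + 1) :=
  mkDerivation_X ℚ _ _

variable [CommRing A]

def relations : Set (Poly A) :=
  {r | (∃ a b : A, r = X (a + b, 0) - (X (a, 0) + X (b, 0))) ∨
    (∃ a b : A, r = X (a * b, 0) - X (a, 0) * X (b, 0)) ∨ r = X (1, 0) - 1}

noncomputable def ideal : Ideal (Poly A) :=
  Ideal.span (⋃ n : ℕ, (⇑(shift A))^[n] '' relations A)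

lemma shift_mem_ideal {p : Poly A} (hp : p ∈ ideal A) : shift A p ∈ ideal A := by
  induction hp using Submodule.span_induction with
  | mem q hq =>
    obtain ⟨n, r, hr, rfl⟩ := Set.mem_iUnion.mp hq
    exact Ideal.subset_span <| Set.mem_iUnion.mpr
      ⟨n + 1, r, hr, Function.iterate_succ_apply' _ n r⟩
  | zero => simp
  | add p q _ _ hp hq => simpa only [map_add] using Ideal.add_mem _ hp hq
  | smul p q _ hq =>
    rw [smul_eq_mul, Derivation.leibniz, smul_eq_mul, smul_eq_mul]
    exact Ideal.add_mem _ (Ideal.mul_mem_left _ _ hq) (Ideal.mul_mem_right _ _ ‹_›)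

end Presentation

end ArcAlgebra

abbrev ArcAlgebra (A : Type*) [CommRing A] : Type _ := ArcAlgebra.Poly A ⧸ ArcAlgebra.ideal A

namespace ArcAlgebra

variable {A : Type*} [CommRing A]

variable (A) in
noncomputable def mk : Poly A →ₐ[ℚ] ArcAlgebra A := Ideal.Quotient.mkₐ ℚ (ideal A)

lemma mk_eq_of_sub_mem_relations {p q : Poly A} (h : p - q ∈ relations A) :
    mk A p = mk A q :=
  Ideal.Quotient.eq.mpr <| Ideal.subset_span <| Set.mem_iUnion.mpr ⟨0, p - q, h, rfl⟩

lemma mk_surjective : Function.Surjective (mk A) := Ideal.Quotient.mkₐ_surjective ℚ _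

lemma mk_shift_eq_zero {p : Poly A} (hp : mk A p = 0) : mk A (shift A p) = 0 := by
  rw [mk, Ideal.Quotient.mkₐ_eq_mk, Ideal.Quotient.eq_zero_iff_mem] at hp ⊢
  exact shift_mem_ideal A hp

variable (A) in
noncomputable def δ : Derivation ℚ (ArcAlgebra A) (ArcAlgebra A) :=
  Derivation.liftOfSurjective mk_surjective fun _ => mk_shift_eq_zero

lemma δ_mk (p : Poly A) : δ A (mk A p) = mk A (shift A p) :=
  Derivation.liftOfSurjective_apply mk_surjective (fun _ => mk_shift_eq_zero) p

variable (A) in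
noncomputable def ι : A →+* ArcAlgebra A :=
  RingHom.mk'
    { toFun a := mk A (X (a, 0))
      map_one' := by
        rw [mk_eq_of_sub_mem_relations (Or.inr (Or.inr rfl)), map_one]
      map_mul' a b := by
        rw [mk_eq_of_sub_mem_relations (Or.inr (Or.inl ⟨a, b, rfl⟩)), map_mul] }
    fun a b => by
      simp only [MonoidHom.coe_mk, OneHom.coe_mk]
      rw [mk_eq_of_sub_mem_relations (Or.inl ⟨a, b, rfl⟩), map_add]

lemma mk_X (a : A) (n : ℕ) : mk A (X (a, n)) = (δ A)^[n] (ι A a) := by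
  induction n with
  | zero => rfl
  | succ n ih => rw [Function.iterate_succ_apply', ← ih, δ_mk, shift_X]

section UniversalProperty

variable {S : Type*} [CommRing S]

theorem ringHom_ext {d : S → S} {φ₁ φ₂ : ArcAlgebra A →+* S}
    (hι : φ₁.comp (ι A) = φ₂.comp (ι A)) (h₁ : Function.Semiconj φ₁ (δ A) d)
    (h₂ : Function.Semiconj φ₂ (δ A) d) : φ₁ = φ₂ := by
  refine Ideal.Quotient.ringHom_ext <| MvPolynomial.ringHom_ext (fun q => ?_) fun ⟨a, n⟩ => ?_
  · exact RingHom.congr_fun (RingHom.ext_rat (φ₁.comp (Ideal.Quotient.mk _) |>.comp C)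
      (φ₂.comp (Ideal.Quotient.mk _) |>.comp C)) q
  · change φ₁ (mk A (X (a, n))) = φ₂ (mk A (X (a, n)))
    rw [mk_X, (h₁.iterate_right n).eq, (h₂.iterate_right n).eq]
    exact congrArg _ (RingHom.congr_fun hι a)

variable [Algebra ℚ S] (d : Derivation ℚ S S) (f : A →+* S)

noncomputable def evalJet : Poly A →ₐ[ℚ] S := aeval fun p => d^[p.2] (f p.1)

@[simp]
lemma evalJet_X (a : A) (n : ℕ) : evalJet d f (X (a, n)) = d^[n] (f a) := aeval_X _ _

lemma evalJet_shift (p : Poly A) : evalJet d f (shift A p) = d (evalJet d f p) := by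
  induction p using MvPolynomial.induction_on with
  | C q => rw [← algebraMap_eq, Derivation.map_algebraMap, AlgHom.commutes,
      Derivation.map_algebraMap, map_zero]
  | add p q hp hq => rw [map_add, map_add, map_add, hp, hq, map_add]
  | mul_X p i hp =>
    rw [Derivation.leibniz, map_mul, Derivation.leibniz, smul_eq_mul, smul_eq_mul, map_add,
      map_mul, map_mul, hp, shift_X, evalJet_X, evalJet_X, Function.iterate_succ_apply',
      smul_eq_mul, smul_eq_mul]

lemma evalJet_relations {r : Poly A} (hr : r ∈ relations A) : evalJet d f r = 0 := by
  rcases hr with ⟨a, b, rfl⟩ | ⟨a, b, rfl⟩ | rfl <;> simp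

lemma ideal_le_ker_evalJet : ideal A ≤ RingHom.ker (evalJet d f) := by
  refine Ideal.span_le.mpr fun p hp => ?_
  obtain ⟨n, r, hr, rfl⟩ := Set.mem_iUnion.mp hp
  rw [SetLike.mem_coe, RingHom.mem_ker,
    ((Function.Semiconj.iterate_right (evalJet_shift d f) n)).eq, evalJet_relations d f hr,
    iterate_map_zero]

noncomputable def lift : ArcAlgebra A →+* S :=
  Ideal.Quotient.lift (ideal A) (evalJet d f) (ideal_le_ker_evalJet d f)

lemma lift_mk (p : Poly A) : lift d f (mk A p) = evalJet d f p := Ideal.Quotient.lift_mk _ _ _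

lemma lift_comp_ι : (lift d f).comp (ι A) = f :=
  RingHom.ext fun a => (lift_mk d f (X (a, 0))).trans (evalJet_X d f a 0)

lemma lift_δ : Function.Semiconj (lift d f) (δ A) d := fun b => by
  obtain ⟨p, rfl⟩ := mk_surjective b
  rw [δ_mk, lift_mk, lift_mk, evalJet_shift]

end UniversalProperty

end ArcAlgebra

theorem arc_algebra_left_adjoint_char_zero_general
    (A : Type u) [CommRing A] :
    ∃ (B : Type u) (_ : CommRing B) (_ : Algebra ℚ B) (δ : B → B)
      (ι : A →+* B),
      (∀ x y : B, δ (x + y) = δ x + δ y) ∧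
      (∀ x y : B, δ (x * y) = δ x * y + x * δ y) ∧
      (∀ (S : Type u) (_ : CommRing S) (_ : Algebra ℚ S) (d : S → S),
        (∀ x y : S, d (x + y) = d x + d y) →
        (∀ x y : S, d (x * y) = d x * y + x * d y) →
        ∀ f : A →+* S,
          ∃! φ : B →+* S, φ.comp ι = f ∧ ∀ b : B, φ (δ b) = d (φ b)) := by
  refine ⟨ArcAlgebra A, inferInstance, inferInstance, ArcAlgebra.δ A, ArcAlgebra.ι A,
    map_add _, fun x y => ?_, fun S _ _ d hadd hmul f => ?_⟩
  · rw [Derivation.leibniz, smul_eq_mul, smul_eq_mul]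
    ring
  · let d' := Derivation.ofMapAddOfLeibniz d hadd hmul
    refine ⟨ArcAlgebra.lift d' f, ⟨ArcAlgebra.lift_comp_ι d' f, ArcAlgebra.lift_δ d' f⟩, ?_⟩
    rintro φ ⟨hι, hδ⟩
    exact ArcAlgebra.ringHom_ext (hι.trans (ArcAlgebra.lift_comp_ι d' f).symm) hδ
      (ArcAlgebra.lift_δ d' f)

/-- Existence of the arc algebra `A^∞` of a commutative
ℚ-algebra `A`: a commutative ℚ-algebra with a derivation and a ring map
`ι : A → A^∞`, universal among ring maps from `A` to commutative ℚ-algebras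
equipped with a derivation. -/
theorem arc_algebra_left_adjoint_char_zero
    (A : Type u) [CommRing A] [Algebra ℚ A] :
    ∃ (B : Type u) (_ : CommRing B) (_ : Algebra ℚ B) (δ : B → B)
      (ι : A →+* B),
      (∀ x y : B, δ (x + y) = δ x + δ y) ∧
      (∀ x y : B, δ (x * y) = δ x * y + x * δ y) ∧
      (∀ (S : Type u) (_ : CommRing S) (_ : Algebra ℚ S) (d : S → S),
        (∀ x y : S, d (x + y) = d x + d y) →
        (∀ x y : S, d (x * y) = d x * y + x * d y) →
        ∀ f : A →+* S,
          ∃! φ : B →+* S, φ.comp ι = f ∧ ∀ b : B, φ (δ b) = d (φ b)) :=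
  arc_algebra_left_adjoint_char_zero_general A
end

section
/- Let A be a commutative ring and B a commutative A-algebra that is formally étale. Then for every derivation d : A → A there exists a unique derivation D : B → B such that D(algebraMap A B a) = algebraMap A B (d a) for all a ∈ A. -/
/-!
A map `D : B → B` is an additive Leibniz map exactly when `x ↦ x + D(x) ε` is a ring section of
the projection `B[ε] → B`, where `B[ε] = B ⊕ B ε` with `ε² = 0`; it extends `d` exactly when this
section restricts on `A` to `a ↦ a + d(a) ε`. Making `B[ε]` an `A`-algebra through that last map,
the projection becomes a square-zero thickening of `A`-algebras, so formal étaleness of `B` gives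
exactly one such section.
-/

namespace TrivSqZeroExt

variable {R S M : Type*} [CommRing R] [CommRing S] [AddCommGroup M] [Module S M]
  [Module Sᵐᵒᵖ M] [IsCentralScalar S M]

theorem snd_mul_of_isCentralScalar (x y : TrivSqZeroExt S M) :
    (x * y).snd = x.fst • y.snd + y.fst • x.snd := by
  rw [snd_mul, op_smul_eq_smul]

def ringHomOfLeibniz (f : R →+* S) (D : R →+ M)
    (hD : ∀ x y, D (x * y) = f x • D y + f y • D x) : R →+* TrivSqZeroExt S M where
  toFun r := (f r, D r)
  map_one' := ext (map_one f) (by simpa using hD 1 1)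
  map_mul' x y := ext (map_mul f x y)
    ((hD x y).trans (snd_mul_of_isCentralScalar (S := S) (f x, D x) (f y, D y)).symm)
  map_zero' := ext (map_zero f) (map_zero D)
  map_add' x y := ext (map_add f x y) (map_add D x y)

@[simp]
theorem fst_ringHomOfLeibniz (f : R →+* S) (D : R →+ M)
    {hD : ∀ x y, D (x * y) = f x • D y + f y • D x} (r : R) :
    (ringHomOfLeibniz f D hD r).fst = f r :=
  rfl

@[simp]
theorem snd_ringHomOfLeibniz (f : R →+* S) (D : R →+ M)
    {hD : ∀ x y, D (x * y) = f x • D y + f y • D x} (r : R) :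
    (ringHomOfLeibniz f D hD r).snd = D r :=
  rfl

theorem snd_map_mul_of_fst_map_eq (ψ : S →+* TrivSqZeroExt S M) (hψ : ∀ x, (ψ x).fst = x)
    (x y : S) :
    (ψ (x * y)).snd = x • (ψ y).snd + y • (ψ x).snd := by
  rw [map_mul, snd_mul_of_isCentralScalar, hψ, hψ]

theorem existsUnique_section_of_formallyEtale [Algebra R S] [Algebra.FormallyEtale R S]
    (φ : R →+* TrivSqZeroExt S M) (hφ : ∀ r, (φ r).fst = algebraMap R S r) :
    ∃! ψ : S →+* TrivSqZeroExt S M, (∀ x, (ψ x).fst = x) ∧ ∀ r, ψ (algebraMap R S r) = φ r := by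
  let _ : Algebra R (TrivSqZeroExt S M) := φ.toAlgebra
  let π : TrivSqZeroExt S M →ₐ[R] S := { (fstHom S S M).toRingHom with commutes' := hφ }
  have hπ : Function.Surjective π := fun x => ⟨inl x, fst_inl M x⟩
  have hker : IsNilpotent (RingHom.ker (π : TrivSqZeroExt S M →+* S)) := ⟨2, kerIdeal_sq S M⟩
  let ℓ := Algebra.FormallySmooth.liftOfSurjective (AlgHom.id R S) π hπ hker
  have hℓ : ∀ x, (ℓ x).fst = x := Algebra.FormallySmooth.liftOfSurjective_apply _ π hπ hker
  refine ⟨ℓ, ⟨hℓ, ℓ.commutes⟩, ?_⟩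
  rintro ψ ⟨hψ, hψφ⟩
  let ψₐ : S →ₐ[R] TrivSqZeroExt S M := { ψ with commutes' := hψφ }
  have hψℓ : ψₐ = ℓ :=
    Algebra.FormallyUnramified.ext' (π : TrivSqZeroExt S M →+* S) hker ψₐ ℓ fun x =>
      (hψ x).trans (hℓ x).symm
  exact congrArg AlgHom.toRingHom hψℓ

end TrivSqZeroExt

open TrivSqZeroExt in
/-- Every derivation of a commutative ring `A` extends uniquely
along a formally étale algebra `A → B`. -/
theorem derivation_extends_uniquely_along_formally_etale
    {A B : Type u} [CommRing A] [CommRing B] [Algebra A B]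
    [Algebra.FormallyEtale A B] (d : A → A)
    (hdadd : ∀ a b : A, d (a + b) = d a + d b)
    (hdmul : ∀ a b : A, d (a * b) = d a * b + a * d b) :
    ∃! D : B → B,
      (∀ x y : B, D (x + y) = D x + D y) ∧
      (∀ x y : B, D (x * y) = D x * y + x * D y) ∧
      (∀ a : A, D (algebraMap A B a) = algebraMap A B (d a)) := by
  let φ : A →+* TrivSqZeroExt B B := ringHomOfLeibniz (algebraMap A B)
    ((algebraMap A B).toAddMonoidHom.comp (AddMonoidHom.mk' d hdadd)) fun x y => by
      simp [hdmul, mul_comm, add_comm]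
  obtain ⟨ψ, ⟨hψ, hψφ⟩, hψ_unique⟩ := existsUnique_section_of_formallyEtale φ fun _ => rfl
  refine ⟨fun x => (ψ x).snd, ⟨fun x y => by simp, fun x y => ?_, fun a => by simp [hψφ, φ]⟩, ?_⟩
  · dsimp only
    rw [snd_map_mul_of_fst_map_eq ψ hψ, smul_eq_mul, smul_eq_mul, mul_comm y, add_comm]
  rintro D ⟨hDadd, hDmul, hDd⟩
  have hD : ringHomOfLeibniz (RingHom.id B) (AddMonoidHom.mk' D hDadd)
      (fun x y => by simp [hDmul, mul_comm, add_comm]) = ψ :=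
    hψ_unique _ ⟨fun _ => rfl, fun a => ext rfl (by simpa [hψφ, φ] using hDd a)⟩
  funext x
  exact congrArg (fun χ : B →+* TrivSqZeroExt B B => (χ x).snd) hD
end

section
/- Let k be a field of characteristic 0, let D be the unique k-linear derivation of the Laurent polynomial ring k[t^{±1}] with D(t) = 1, and let φ be a k-algebra automorphism of k[t^{±1}] that commutes with D, i.e. φ(D(p)) = D(φ(p)) for all p. Then φ is the identity. -/
/-!
An automorphism `φ` commuting with `D` satisfies `D (φ t) = φ (D t) = 1`, so `φ t - t` lies in
the kernel of `D`, which in characteristic zero consists of the constants: `φ t = t + c`. But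
`φ t` is a unit, while for `c ≠ 0` the evaluation `t ↦ -c` sends `t + c` to the non-unit `0`.
Hence `φ t = t`, and a `k`-algebra endomorphism of `k[t^{±1}]` is determined by the image of `t`.
-/

open LaurentPolynomial

namespace LaurentPolynomial

theorem algHom_ext {R A : Type*} [CommSemiring R] [Semiring A] [Algebra R A]
    {f g : R[T;T⁻¹] →ₐ[R] A} (h : f (T 1) = g (T 1)) : f = g := by
  refine AlgHom.coe_ringHom_injective <|
    IsLocalization.ringHom_ext (Submonoid.powers (Polynomial.X : Polynomial R)) <| Polynomial.ringHom_ext ?_ ?_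
  · intro a
    simp only [RingHom.comp_apply, algebraMap_eq_toLaurent, Polynomial.toLaurent_C,
      C_eq_algebraMap, AlgHom.coe_toRingHom, AlgHom.commutes]
  · simpa using h

theorem eq_zero_of_isUnit_T_one_add_C {K : Type*} [Field K] {c : K}
    (h : IsUnit (T 1 + C c : K[T;T⁻¹])) : c = 0 := by
  by_contra hc
  have := h.map (eval₂ (RingHom.id K) (Units.mk0 (-c) (neg_ne_zero.mpr hc)))
  simp at this

variable {R M : Type*} [CommRing R] [AddCommGroup M] [Module R[T;T⁻¹] M] [Module R M]

theorem derivation_T (D : Derivation R R[T;T⁻¹] M) (n : ℤ) :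
    D (T n) = n • (T (n - 1) : R[T;T⁻¹]) • D (T 1) := by
  have h_neg_one : D (T (-1)) = -(T (-2) : R[T;T⁻¹]) • D (T 1) := by
    rw [D.leibniz_of_mul_eq_one (b := T 1) (by rw [← T_add]; simp), T_pow]
    norm_num
  induction n using Int.induction_on with
  | zero => simp
  | succ n ih =>
    rw [T_add, D.leibniz, ih, smul_comm (T 1 : R[T;T⁻¹]) (n : ℤ), smul_smul, ← T_add,
      add_sub_cancel, add_sub_cancel_right, add_smul, one_smul, add_comm]
  | pred n ih =>
    rw [sub_eq_add_neg, T_add, D.leibniz, ih, h_neg_one, smul_comm (T (-1) : R[T;T⁻¹]) (_ : ℤ),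
      smul_smul, smul_smul, mul_neg, ← T_add, ← T_add,
      show -(n : ℤ) + -2 = -n + -1 - 1 by ring, show -1 + (-(n : ℤ) - 1) = -n + -1 - 1 by ring]
    module

section

variable {D : Derivation R R[T;T⁻¹] R[T;T⁻¹]} (hD : D (T 1) = 1)
include hD

theorem coeff_derivation (p : R[T;T⁻¹]) (m : ℤ) :
    (D p).coeff m = (m + 1) • p.coeff (m + 1) := by
  induction p using LaurentPolynomial.induction_on' with
  | add p q hp hq =>
    simp only [map_add, AddMonoidAlgebra.coeff_add, Finsupp.add_apply, hp, hq, smul_add]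
  | C_mul_T n a =>
    have h : D (C a * T n) = n • (C a * T (n - 1)) := by
      rw [D.leibniz, derivation_T, hD, C_eq_algebraMap, D.map_algebraMap, smul_zero, add_zero,
        smul_eq_mul, smul_eq_mul, mul_one, mul_smul_comm]
    rw [h, ← single_eq_C_mul_T, ← single_eq_C_mul_T]
    simp only [AddMonoidAlgebra.coeff_smul, AddMonoidAlgebra.coeff_single, Finsupp.smul_apply,
      Finsupp.single_apply]
    rcases eq_or_ne n (m + 1) with rfl | hn
    · simp
    · simp [hn, show n - 1 ≠ m by omega]

theorem eq_C_coeff_zero_of_derivation_eq_zero [IsAddTorsionFree R] {p : R[T;T⁻¹]}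
    (hp : D p = 0) : p = C (p.coeff 0) := by
  ext m
  rw [C_apply]
  split_ifs with hm
  · rw [hm]
  · have h := coeff_derivation hD p (m - 1)
    rw [hp, sub_add_cancel] at h
    exact zsmul_right_injective hm (by simpa using h.symm)

end

end LaurentPolynomial

/-- Over a field `k` of characteristic 0, any `k`-algebra
automorphism of `k[t^{±1}]` commuting with the derivation `d/dt` (the unique
`k`-linear derivation with `D t = 1`) is the identity. -/
theorem automorphism_commuting_with_ddt_is_id
    (k : Type*) [Field k] [CharZero k]
    (D : Derivation k (LaurentPolynomial k) (LaurentPolynomial k))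
    (hD : D (T 1) = 1)
    (φ : LaurentPolynomial k ≃ₐ[k] LaurentPolynomial k)
    (hφ : ∀ p : LaurentPolynomial k, φ (D p) = D (φ p)) :
    ∀ p : LaurentPolynomial k, φ p = p := by
  have h_ker : D (φ (T 1) - T 1) = 0 := by rw [map_sub, ← hφ, hD, map_one, sub_self]
  obtain ⟨c, hc⟩ : ∃ c, φ (T 1) = T 1 + C c :=
    ⟨_, eq_add_of_sub_eq' (eq_C_coeff_zero_of_derivation_eq_zero hD h_ker)⟩
  have hc_zero : c = 0 := eq_zero_of_isUnit_T_one_add_C (hc ▸ (isUnit_T 1).map φ)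
  have h_id : (φ : LaurentPolynomial k →ₐ[k] LaurentPolynomial k) = AlgHom.id k _ :=
    algHom_ext (by simp [hc, hc_zero])
  exact fun p => AlgHom.congr_fun h_id p
end

section
/- Let k be a field, m a positive integer, ζ ∈ k a primitive m-th root of unity, V a k-vector space, and g : V → V a k-linear automorphism with g^m = id. Let γ be the k-algebra automorphism of the Laurent polynomial ring k[u^{±1}] determined by γ(u) = ζ·u, and let g ⊗ γ be the induced k-linear automorphism of V ⊗_k k[u^{±1}]. Then the subspace of fixed points of g ⊗ γ in V ⊗_k k[u^{±1}] equals the k-linear span of the elementary tensors { x ⊗ u^n : n ∈ ℤ, x ∈ V, g(x) = ζ^{−n}·x }. -/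
/-!
The monomials `T n` form a basis of `k[T;T⁻¹]` on which `γ` acts diagonally, `γ (T n) = ζ ^ n • T n`.
Writing a tensor uniquely as `∑ xₙ ⊗ T n`, the operator `g ⊗ γ` acts on the coefficients by
`xₙ ↦ ζ ^ n • g xₙ`, so a tensor is fixed exactly when every coefficient `xₙ` is a
`ζ ^ (-n)`-eigenvector of `g`.
-/

open LaurentPolynomial TensorProduct

lemma Module.Basis.repr_apply_of_apply_eq_smul {R N κ : Type*} [CommSemiring R] [AddCommMonoid N]
    [Module R N] (𝒞 : Module.Basis κ R N) {c : κ → R} {h : N →ₗ[R] N}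
    (hh : ∀ i, h (𝒞 i) = c i • 𝒞 i) (n : N) (i : κ) : 𝒞.repr (h n) i = c i * 𝒞.repr n i := by
  have : 𝒞.coord i ∘ₗ h = c i • 𝒞.coord i := 𝒞.ext fun j => by
    rcases eq_or_ne j i with rfl | hij <;> simp [*]
  exact LinearMap.congr_fun this n

namespace TensorProduct

variable {R M N κ : Type*} [CommSemiring R] [AddCommMonoid M] [Module R M] [AddCommMonoid N]
  [Module R N] (𝒞 : Module.Basis κ R N) {c : κ → R} {h : N →ₗ[R] N}

lemma equivFinsuppOfBasisRight_map_apply [DecidableEq κ] (hh : ∀ i, h (𝒞 i) = c i • 𝒞 i)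
    (f : M →ₗ[R] M) (x : M ⊗[R] N) (i : κ) :
    equivFinsuppOfBasisRight 𝒞 (map f h x) i = c i • f (equivFinsuppOfBasisRight 𝒞 x i) := by
  induction x using TensorProduct.induction_on with
  | zero => simp
  | tmul m n =>
    simp only [map_tmul, equivFinsuppOfBasisRight_apply_tmul_apply,
      𝒞.repr_apply_of_apply_eq_smul hh, map_smul, mul_smul]
  | add x y hx hy => simp only [map_add, Finsupp.add_apply, hx, hy, smul_add]

theorem setOf_map_apply_eq_self_eq_span (hh : ∀ i, h (𝒞 i) = c i • 𝒞 i) (f : M →ₗ[R] M) :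
    {x | map f h x = x} =
      (Submodule.span R {z | ∃ i m, c i • f m = m ∧ z = m ⊗ₜ[R] 𝒞 i} :
        Submodule R (M ⊗[R] N)) := by
  classical
  refine Set.Subset.antisymm (fun x hx => ?_) ?_
  · have hcoeff (i : κ) : c i • f (equivFinsuppOfBasisRight 𝒞 x i) =
        equivFinsuppOfBasisRight 𝒞 x i := by
      rw [← equivFinsuppOfBasisRight_map_apply 𝒞 hh, hx.out]
    rw [← (equivFinsuppOfBasisRight 𝒞).symm_apply_apply x, equivFinsuppOfBasisRight_symm_apply]
    exact Submodule.finsuppSum_mem _ _ _ _ fun i _ => Submodule.subset_span ⟨i, _, hcoeff i, rfl⟩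
  · show _ ≤ LinearMap.eqLocus (map f h) LinearMap.id
    rw [Submodule.span_le]
    rintro _ ⟨i, m, hm, rfl⟩
    simp only [SetLike.mem_coe, LinearMap.mem_eqLocus, map_tmul, hh, LinearMap.id_apply, tmul_smul,
      smul_tmul', hm]

end TensorProduct

namespace LaurentPolynomial

variable {k : Type*} [Field k] {ζ : k} {γ : k[T;T⁻¹] →ₐ[k] k[T;T⁻¹]}

lemma ne_zero_of_map_T_one_eq_smul (hγ : γ (T 1) = ζ • T 1) : ζ ≠ 0 := by
  rintro rfl
  simpa [hγ] using (isUnit_T 1).map γ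

lemma map_T_of_map_T_one_eq_smul (hγ : γ (T 1) = ζ • T 1) (n : ℤ) :
    γ (T n) = ζ ^ n • T n := by
  have hζ := ne_zero_of_map_T_one_eq_smul hγ
  have hneg : γ (T (-1)) = ζ⁻¹ • T (-1) := by
    refine ((isUnit_T 1).map γ).mul_right_cancel ?_
    rw [← map_mul, ← T_add, hγ, smul_mul_smul_comm, ← T_add, inv_mul_cancel₀ hζ]
    simp
  induction n using Int.induction_on with
  | zero => simp
  | succ n ih => rw [T_add, map_mul, ih, hγ, smul_mul_smul_comm, ← T_add, zpow_add_one₀ hζ]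
  | pred n ih =>
    rw [T_sub, map_mul, ih, hneg, smul_mul_smul_comm, ← T_sub, zpow_sub_one₀ hζ]

end LaurentPolynomial

theorem fixed_points_of_twisted_loop_operator_general
    (k : Type*) [Field k] (ζ : k)
    (V : Type*) [AddCommGroup V] [Module k V]
    (g : V →ₗ[k] V)
    (γ : LaurentPolynomial k ≃ₐ[k] LaurentPolynomial k)
    (hγ : γ (T 1) = ζ • T 1) :
    {w : V ⊗[k] LaurentPolynomial k |
        TensorProduct.map g γ.toLinearMap w = w}
      = (Submodule.span k
          {z : V ⊗[k] LaurentPolynomial k |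
            ∃ (n : ℤ) (x : V), g x = ζ ^ (-n) • x ∧ z = x ⊗ₜ[k] T n} :
          Submodule k (V ⊗[k] LaurentPolynomial k)) := by
  have hζ : ζ ≠ 0 := ne_zero_of_map_T_one_eq_smul (γ := γ.toAlgHom) hγ
  rw [setOf_map_apply_eq_self_eq_span (AddMonoidAlgebra.basis ℤ k)
    (map_T_of_map_T_one_eq_smul (γ := γ.toAlgHom) hγ)]
  simp only [AddMonoidAlgebra.basis_apply, zpow_neg, eq_inv_smul_iff₀ (zpow_ne_zero _ hζ)]
  rfl

/-- For a finite order automorphism `g` of a `k`-vector space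
`V` (with `g^m = 1`, `ζ` a primitive `m`-th root of unity) and the
automorphism `γ : u ↦ ζ u` of `k[u^{±1}]`, the fixed points of `g ⊗ γ` on
`V ⊗_k k[u^{±1}]` are the span of the elementary tensors `x ⊗ uⁿ` with
`g x = ζ^{-n} x`. -/
theorem fixed_points_of_twisted_loop_operator
    (k : Type*) [Field k] (m : ℕ) (hm : 0 < m) (ζ : k)
    (hζ₁ : ζ ^ m = 1) (hζ₂ : ∀ d : ℕ, 0 < d → d < m → ζ ^ d ≠ 1)
    (V : Type*) [AddCommGroup V] [Module k V]
    (g : V →ₗ[k] V) (hg : g ^ m = 1)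
    (γ : LaurentPolynomial k ≃ₐ[k] LaurentPolynomial k)
    (hγ : γ (T 1) = ζ • T 1) :
    {w : V ⊗[k] LaurentPolynomial k |
        TensorProduct.map g γ.toLinearMap w = w}
      = (Submodule.span k
          {z : V ⊗[k] LaurentPolynomial k |
            ∃ (n : ℤ) (x : V), g x = ζ ^ (-n) • x ∧ z = x ⊗ₜ[k] T n} :
          Submodule k (V ⊗[k] LaurentPolynomial k)) :=
  fixed_points_of_twisted_loop_operator_general k ζ V g γ hγ
end
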